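/- arXiv:2312.10596 — 5 statements merged into one kernel-verified Lean document; each statement's English description precedes it below -/
import Mathlib

section
/- Let σ : V → (0, ∞) be measurable with E[σ(V)²] < ∞, let ϖ ∈ (0,1], and let τ* > 0 satisfy E[min(σ(V)/τ*, 1)] = ϖ. Define ρ*(v) = min(σ(v)/τ*, 1). Then for every measurable ρ : V → (0, 1] with E[ρ(V)] ≤ ϖ, one has E[σ(V)²/ρ(V)] ≥ E[σ(V)²/ρ*(V)]. -/
/-!
Pointwise, the truncated Neyman rule `ρ* = min (s / τ) 1` minimises the Lagrangian
`r ↦ s² / r + τ² r` over `r ∈ (0, 1]`. Integrating this inequality and using that `ρ*` spends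
the whole budget while `ρ` spends at most the budget, the multiplier term `τ² E[ρ]` is dominated
by `τ² E[ρ*]`, which is finite and can be cancelled.
-/

open MeasureTheory

lemma sq_div_add_sq_mul_min_div_one_le (s : ℝ) {τ r : ℝ} (hτ : 0 < τ) (hr₀ : 0 < r)
    (hr₁ : r ≤ 1) :
    s ^ 2 / min (s / τ) 1 + τ ^ 2 * min (s / τ) 1 ≤ s ^ 2 / r + τ ^ 2 * r := by
  rcases le_or_gt (s / τ) 1 with h | h
  · have h_left : s ^ 2 / (s / τ) + τ ^ 2 * (s / τ) = 2 * s * τ := by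
      rcases eq_or_ne s 0 with rfl | hs
      · simp
      · field_simp; ring
    -- AM-GM: `s² / r + τ² r - 2 s τ = (s - τ r)² / r`
    have h_amgm : 2 * s * τ ≤ s ^ 2 / r + τ ^ 2 * r := by
      rw [div_add' _ _ _ hr₀.ne', le_div_iff₀ hr₀]
      nlinarith [sq_nonneg (s - τ * r)]
    rwa [min_eq_left h, h_left]
  · have hτs : τ ^ 2 * r ≤ s ^ 2 := by
      have : τ < s := (one_lt_div hτ).mp h
      nlinarith
    rw [min_eq_right h.le, div_one, div_add' _ _ _ hr₀.ne', le_div_iff₀ hr₀]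
    nlinarith [mul_nonneg (sub_nonneg.mpr hr₁) (sub_nonneg.mpr hτs)]

lemma ofReal_sq_div_add_sq_mul_min_div_one_le {s τ r : ℝ} (hs : 0 ≤ s) (hτ : 0 < τ)
    (hr₀ : 0 < r) (hr₁ : r ≤ 1) :
    ENNReal.ofReal (s ^ 2 / min (s / τ) 1) + ENNReal.ofReal (τ ^ 2) * ENNReal.ofReal (min (s / τ) 1)
      ≤ ENNReal.ofReal (s ^ 2 / r) + ENNReal.ofReal (τ ^ 2) * ENNReal.ofReal r := by
  have hmin : 0 ≤ min (s / τ) 1 := le_min (div_nonneg hs hτ.le) zero_le_one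
  rw [← ENNReal.ofReal_mul (sq_nonneg _), ← ENNReal.ofReal_mul (sq_nonneg _),
    ← ENNReal.ofReal_add (div_nonneg (sq_nonneg _) hmin) (mul_nonneg (sq_nonneg _) hmin),
    ← ENNReal.ofReal_add (div_nonneg (sq_nonneg _) hr₀.le) (mul_nonneg (sq_nonneg _) hr₀.le)]
  exact ENNReal.ofReal_le_ofReal (sq_div_add_sq_mul_min_div_one_le s hτ hr₀ hr₁)

section Lagrangian

variable {Ω : Type*} [MeasurableSpace Ω] {μ : Measure Ω}

lemma lintegral_le_of_add_const_mul_le {F G p q : Ω → ENNReal} {c : ENNReal} (hc : c ≠ ⊤)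
    (hp : AEMeasurable p μ) (hq : AEMeasurable q μ) (hp_fin : ∫⁻ ω, p ω ∂μ ≠ ⊤)
    (hqp : ∫⁻ ω, q ω ∂μ ≤ ∫⁻ ω, p ω ∂μ) (h : ∀ᵐ ω ∂μ, F ω + c * p ω ≤ G ω + c * q ω) :
    ∫⁻ ω, F ω ∂μ ≤ ∫⁻ ω, G ω ∂μ := by
  refine ENNReal.le_of_add_le_add_right (ENNReal.mul_ne_top hc hp_fin) ?_
  calc ∫⁻ ω, F ω ∂μ + c * ∫⁻ ω, p ω ∂μ
      = ∫⁻ ω, F ω + c * p ω ∂μ := by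
        rw [lintegral_add_right' _ (hp.const_mul c), lintegral_const_mul' _ _ hc]
    _ ≤ ∫⁻ ω, G ω + c * q ω ∂μ := lintegral_mono_ae h
    _ = ∫⁻ ω, G ω ∂μ + c * ∫⁻ ω, q ω ∂μ := by
        rw [lintegral_add_right' _ (hq.const_mul c), lintegral_const_mul' _ _ hc]
    _ ≤ ∫⁻ ω, G ω ∂μ + c * ∫⁻ ω, p ω ∂μ := by gcongr

lemma lintegral_ofReal_eq_ofReal_integral_of_mem_Icc [IsFiniteMeasure μ] {f : Ω → ℝ}
    (hf : AEStronglyMeasurable f μ) (h : ∀ ω, f ω ∈ Set.Icc (0 : ℝ) 1) :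
    ∫⁻ ω, ENNReal.ofReal (f ω) ∂μ = ENNReal.ofReal (∫ ω, f ω ∂μ) := by
  have hf_int : Integrable f μ :=
    .of_bound hf 1 (.of_forall fun ω => by rw [Real.norm_of_nonneg (h ω).1]; exact (h ω).2)
  exact (ofReal_integral_eq_lintegral_ofReal hf_int (.of_forall fun ω => (h ω).1)).symm

end Lagrangian

theorem stmt3_general {Ω α : Type*} [MeasurableSpace Ω] [MeasurableSpace α]
    (μ : Measure Ω) [IsProbabilityMeasure μ]
    (V : Ω → α) (hV : Measurable V) (σ : α → ℝ) (hσm : Measurable σ)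
    (hσpos : ∀ v, 0 < σ v)
    (ϖ : ℝ) (τs : ℝ) (hτ : 0 < τs)
    (hbudget : ∫ ω, min (σ (V ω) / τs) 1 ∂μ = ϖ)
    (ρ : α → ℝ) (hρm : Measurable ρ) (hρ : ∀ v, ρ v ∈ Set.Ioc (0 : ℝ) 1)
    (hb : ∫ ω, ρ (V ω) ∂μ ≤ ϖ) :
    ∫⁻ ω, ENNReal.ofReal ((σ (V ω)) ^ 2 / min (σ (V ω) / τs) 1) ∂μ ≤
      ∫⁻ ω, ENNReal.ofReal ((σ (V ω)) ^ 2 / ρ (V ω)) ∂μ := by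
  set ρs : Ω → ℝ := fun ω => min (σ (V ω) / τs) 1
  have hρs_m : Measurable ρs := ((hσm.comp hV).div_const τs).min measurable_const
  have hρs_lint : ∫⁻ ω, ENNReal.ofReal (ρs ω) ∂μ = ENNReal.ofReal ϖ := by
    rw [lintegral_ofReal_eq_ofReal_integral_of_mem_Icc hρs_m.aestronglyMeasurable
      fun ω => ⟨le_min (div_nonneg (hσpos _).le hτ.le) zero_le_one, min_le_right _ _⟩, hbudget]
  have hρV_m : Measurable fun ω => ρ (V ω) := hρm.comp hV
  have hρ_lint : ∫⁻ ω, ENNReal.ofReal (ρ (V ω)) ∂μ ≤ ENNReal.ofReal ϖ := by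
    rw [lintegral_ofReal_eq_ofReal_integral_of_mem_Icc hρV_m.aestronglyMeasurable
      fun ω => Set.Ioc_subset_Icc_self (hρ (V ω))]
    exact ENNReal.ofReal_le_ofReal hb
  exact lintegral_le_of_add_const_mul_le (c := ENNReal.ofReal (τs ^ 2)) ENNReal.ofReal_ne_top
    hρs_m.ennreal_ofReal.aemeasurable hρV_m.ennreal_ofReal.aemeasurable
    (hρs_lint ▸ ENNReal.ofReal_ne_top) (hρ_lint.trans hρs_lint.ge) (.of_forall fun ω =>
      ofReal_sq_div_add_sq_mul_min_div_one_le (hσpos _).le hτ (hρ (V ω)).1 (hρ (V ω)).2)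

theorem stmt3 {Ω α : Type*} [MeasurableSpace Ω] [MeasurableSpace α]
    (μ : Measure Ω) [IsProbabilityMeasure μ]
    (V : Ω → α) (hV : Measurable V) (σ : α → ℝ) (hσm : Measurable σ)
    (hσpos : ∀ v, 0 < σ v)
    (hσ2 : ∫⁻ ω, ENNReal.ofReal ((σ (V ω)) ^ 2) ∂μ < ⊤)
    (ϖ : ℝ) (hϖ : ϖ ∈ Set.Ioc (0 : ℝ) 1) (τs : ℝ) (hτ : 0 < τs)
    (hbudget : ∫ ω, min (σ (V ω) / τs) 1 ∂μ = ϖ)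
    (ρ : α → ℝ) (hρm : Measurable ρ) (hρ : ∀ v, ρ v ∈ Set.Ioc (0 : ℝ) 1)
    (hb : ∫ ω, ρ (V ω) ∂μ ≤ ϖ) :
    ∫⁻ ω, ENNReal.ofReal ((σ (V ω)) ^ 2 / min (σ (V ω) / τs) 1) ∂μ ≤
      ∫⁻ ω, ENNReal.ofReal ((σ (V ω)) ^ 2 / ρ (V ω)) ∂μ :=
  stmt3_general μ V hV σ hσm hσpos ϖ τs hτ hbudget ρ hρm hρ hb
end

section
/- Let σ* > 0 satisfy E[min(σ(V)/τ, 1)] = ϖ at τ = τ*, where σ : V → (0, ∞) with E[σ(V)²] < ∞. Then the minimum value min over feasible ρ of E[σ(V)²/ρ(V)] equals E[σ(V)·max(σ(V), τ*)]. -/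
/-!
The budget constraint is dualised with the multiplier `τ*²`: pointwise,
`σ²/ρ + τ*² ρ` is minimised over `ρ ∈ (0, 1]` at `ρ* = min (σ/τ*) 1`, with minimum value
`σ · max σ τ* + τ*² ρ*`. Integrating, and using `E[ρ] ≤ ϖ = E[ρ*]` to cancel the multiplier
terms, gives `E[σ²/ρ] ≥ E[σ · max σ τ*]`, with equality at `ρ = ρ*`.
-/

open MeasureTheory

theorem mul_max_eq_sq_div_min {s τ : ℝ} (hτ : 0 < τ) :
    s * max s τ = s ^ 2 / min (s / τ) 1 := by
  rcases le_total τ s with h | h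
  · rw [max_eq_left h, min_eq_right ((one_le_div hτ).2 h), div_one, sq]
  · rw [max_eq_right h, min_eq_left ((div_le_one hτ).2 h)]
    field_simp

theorem mul_max_add_sq_mul_min_le {s τ r : ℝ} (hτ : 0 < τ) (hr : 0 < r)
    (hr1 : r ≤ 1) : s * max s τ + τ ^ 2 * min (s / τ) 1 ≤ s ^ 2 / r + τ ^ 2 * r := by
  have hdiv : s ^ 2 / r * r = s ^ 2 := div_mul_cancel₀ _ hr.ne'
  rcases le_total τ s with h | h
  · rw [max_eq_left h, min_eq_right ((one_le_div hτ).2 h)]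
    have hsq : τ ^ 2 ≤ s ^ 2 / r :=
      (pow_le_pow_left₀ hτ.le h 2).trans (le_div_self (sq_nonneg s) hr hr1)
    -- the gap is `(1 - r) (s²/r - τ²)`
    nlinarith [mul_nonneg (sub_nonneg.2 hr1) (sub_nonneg.2 hsq)]
  · have hτs : τ ^ 2 * (s / τ) = τ * s := by field_simp
    rw [max_eq_right h, min_eq_left ((div_le_one hτ).2 h), hτs]
    -- the gap is `(s - τ r)² / r`
    nlinarith [mul_nonneg (sq_nonneg (s - τ * r)) hr.le]

theorem lintegral_ofReal_le_of_add_le {Ω : Type*} [MeasurableSpace Ω] {μ : Measure Ω}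
    {f g h k : Ω → ℝ} (hf : ∀ ω, 0 ≤ f ω) (hg : ∀ ω, 0 ≤ g ω) (hk : ∀ ω, 0 ≤ k ω)
    (hg_int : Integrable g μ) (hk_int : Integrable k μ) (hfg : ∀ ω, f ω + g ω ≤ h ω + k ω)
    (hkg : ∫ ω, k ω ∂μ ≤ ∫ ω, g ω ∂μ) :
    ∫⁻ ω, ENNReal.ofReal (f ω) ∂μ ≤ ∫⁻ ω, ENNReal.ofReal (h ω) ∂μ := by
  have hg_eq := ofReal_integral_eq_lintegral_ofReal hg_int (ae_of_all _ hg)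
  have hk_eq := ofReal_integral_eq_lintegral_ofReal hk_int (ae_of_all _ hk)
  refine ENNReal.le_of_add_le_add_right (hg_eq ▸ ENNReal.ofReal_ne_top) ?_
  calc ∫⁻ ω, ENNReal.ofReal (f ω) ∂μ + ∫⁻ ω, ENNReal.ofReal (g ω) ∂μ
      ≤ ∫⁻ ω, ENNReal.ofReal (f ω) + ENNReal.ofReal (g ω) ∂μ := le_lintegral_add _ _
    _ ≤ ∫⁻ ω, ENNReal.ofReal (h ω) + ENNReal.ofReal (k ω) ∂μ := by
      refine lintegral_mono fun ω => ?_
      rw [← ENNReal.ofReal_add (hf ω) (hg ω)]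
      exact (ENNReal.ofReal_le_ofReal (hfg ω)).trans ENNReal.ofReal_add_le
    _ = ∫⁻ ω, ENNReal.ofReal (h ω) ∂μ + ∫⁻ ω, ENNReal.ofReal (k ω) ∂μ :=
      lintegral_add_right' _ hk_int.aemeasurable.ennreal_ofReal
    _ ≤ ∫⁻ ω, ENNReal.ofReal (h ω) ∂μ + ∫⁻ ω, ENNReal.ofReal (g ω) ∂μ := by
      rw [← hg_eq, ← hk_eq]
      gcongr

theorem integrable_comp_of_mem_Ioc {Ω α : Type*} [MeasurableSpace Ω] [MeasurableSpace α]
    {μ : Measure Ω} [IsFiniteMeasure μ] {V : Ω → α} (hV : Measurable V) {ρ : α → ℝ}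
    (hρ : Measurable ρ) (hρ01 : ∀ v, ρ v ∈ Set.Ioc (0 : ℝ) 1) :
    Integrable (fun ω => ρ (V ω)) μ :=
  .of_bound (hρ.comp hV).aestronglyMeasurable 1 <| ae_of_all _ fun ω => by
    rw [Real.norm_of_nonneg (hρ01 _).1.le]
    exact (hρ01 _).2

theorem stmt6_general {Ω α : Type*} [MeasurableSpace Ω] [MeasurableSpace α]
    (μ : Measure Ω) [IsProbabilityMeasure μ]
    (V : Ω → α) (hV : Measurable V) (σ : α → ℝ) (hσm : Measurable σ)
    (hσpos : ∀ v, 0 < σ v)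
    (ϖ : ℝ) (τs : ℝ) (hτ : 0 < τs)
    (hbudget : ∫ ω, min (σ (V ω) / τs) 1 ∂μ = ϖ) :
    IsLeast
      {x : ENNReal | ∃ ρ : α → ℝ, Measurable ρ ∧ (∀ v, ρ v ∈ Set.Ioc (0 : ℝ) 1) ∧
        (∫ ω, ρ (V ω) ∂μ) ≤ ϖ ∧
        x = ∫⁻ ω, ENNReal.ofReal ((σ (V ω)) ^ 2 / ρ (V ω)) ∂μ}
      (∫⁻ ω, ENNReal.ofReal (σ (V ω) * max (σ (V ω)) τs) ∂μ) := by
  set ρs : α → ℝ := fun v => min (σ v / τs) 1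
  have hρs : Measurable ρs := (hσm.div_const _).min measurable_const
  have hρs01 : ∀ v, ρs v ∈ Set.Ioc (0 : ℝ) 1 :=
    fun v => ⟨lt_min (div_pos (hσpos v) hτ) one_pos, min_le_right _ _⟩
  refine ⟨⟨ρs, hρs, hρs01, hbudget.le, lintegral_congr fun ω => ?_⟩, ?_⟩
  · rw [mul_max_eq_sq_div_min hτ]
  rintro x ⟨ρ, hρ, hρ01, hρϖ, rfl⟩
  refine lintegral_ofReal_le_of_add_le (g := fun ω => τs ^ 2 * ρs (V ω))
    (k := fun ω => τs ^ 2 * ρ (V ω))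
    (fun ω => mul_nonneg (hσpos _).le ((hσpos _).le.trans (le_max_left _ _)))
    (fun ω => mul_nonneg (sq_nonneg _) (hρs01 _).1.le)
    (fun ω => mul_nonneg (sq_nonneg _) (hρ01 _).1.le)
    ((integrable_comp_of_mem_Ioc hV hρs hρs01).const_mul _)
    ((integrable_comp_of_mem_Ioc hV hρ hρ01).const_mul _)
    (fun ω => mul_max_add_sq_mul_min_le hτ (hρ01 _).1 (hρ01 _).2) ?_
  rw [integral_const_mul, integral_const_mul]
  exact mul_le_mul_of_nonneg_left (hρϖ.trans hbudget.ge) (sq_nonneg _)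

theorem stmt6 {Ω α : Type*} [MeasurableSpace Ω] [MeasurableSpace α]
    (μ : Measure Ω) [IsProbabilityMeasure μ]
    (V : Ω → α) (hV : Measurable V) (σ : α → ℝ) (hσm : Measurable σ)
    (hσpos : ∀ v, 0 < σ v)
    (hσ2 : ∫⁻ ω, ENNReal.ofReal ((σ (V ω)) ^ 2) ∂μ < ⊤)
    (ϖ : ℝ) (hϖ : ϖ ∈ Set.Ioc (0 : ℝ) 1) (τs : ℝ) (hτ : 0 < τs)
    (hbudget : ∫ ω, min (σ (V ω) / τs) 1 ∂μ = ϖ) :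
    IsLeast
      {x : ENNReal | ∃ ρ : α → ℝ, Measurable ρ ∧ (∀ v, ρ v ∈ Set.Ioc (0 : ℝ) 1) ∧
        (∫ ω, ρ (V ω) ∂μ) ≤ ϖ ∧
        x = ∫⁻ ω, ENNReal.ofReal ((σ (V ω)) ^ 2 / ρ (V ω)) ∂μ}
      (∫⁻ ω, ENNReal.ofReal (σ (V ω) * max (σ (V ω)) τs) ∂μ) :=
  stmt6_general μ V hV σ hσm hσpos ϖ τs hτ hbudget
end

section
/- For fixed y ∈ ℝ and a ∈ ℝ, the function s ↦ (y − a)²/Λ(s) + Λ(s) is convex on ℝ, where Λ(x) = log(1 + exp(x)). -/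
/-!
Write `Λ x = log (1 + exp x)`. Then `Λ' = σ` is the sigmoid and `Λ'' = σ (1 - σ) ≥ 0`, so `Λ` is
convex. Since `Λ ≤ exp` and `exp · (1 - σ) = σ`, we get `Λ Λ'' ≤ σ² = (Λ')²`, and this makes
`(1 / Λ)'' = (2 (Λ')² - Λ Λ'') / Λ³` nonnegative. The function is then the nonnegative combination
`(y - a)² · Λ⁻¹ + Λ` of two convex functions.
-/

open Real Set

lemma convexOn_univ_of_hasDerivAt2_nonneg {f f' f'' : ℝ → ℝ}
    (hf : ∀ x, HasDerivAt f (f' x) x) (hf' : ∀ x, HasDerivAt f' (f'' x) x)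
    (hf''_nonneg : ∀ x, 0 ≤ f'' x) : ConvexOn ℝ univ f :=
  convexOn_of_hasDerivWithinAt2_nonneg convex_univ
    (continuous_iff_continuousAt.2 fun x => (hf x).continuousAt).continuousOn
    (fun x _ => (hf x).hasDerivWithinAt) (fun x _ => (hf' x).hasDerivWithinAt)
    fun x _ => hf''_nonneg x

lemma convexOn_univ_inv_of_mul_deriv2_le {g g' g'' : ℝ → ℝ} (hg : ∀ x, 0 < g x)
    (hg' : ∀ x, HasDerivAt g (g' x) x) (hg'' : ∀ x, HasDerivAt g' (g'' x) x)
    (hle : ∀ x, g x * g'' x ≤ 2 * g' x ^ 2) : ConvexOn ℝ univ fun x => (g x)⁻¹ := by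
  refine convexOn_univ_of_hasDerivAt2_nonneg (f' := fun x => -g' x / g x ^ 2)
    (f'' := fun x => (2 * g' x ^ 2 - g x * g'' x) / g x ^ 3) (fun x => (hg' x).inv (hg x).ne')
    (fun x => ?_) fun x => div_nonneg (by linarith [hle x]) (pow_pos (hg x) 3).le
  refine ((hg'' x).neg.div ((hg' x).pow 2) (pow_pos (hg x) 2).ne').congr_deriv ?_
  simp only [Pi.neg_apply, Pi.pow_apply]
  field_simp [(hg x).ne']
  ring

noncomputable def softplus (x : ℝ) : ℝ := log (1 + exp x)

lemma softplus_pos (x : ℝ) : 0 < softplus x :=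
  log_pos (lt_add_of_pos_right 1 (exp_pos x))

lemma softplus_le_exp (x : ℝ) : softplus x ≤ exp x :=
  (log_le_sub_one_of_pos (by positivity)).trans_eq (add_sub_cancel_left 1 (exp x))

lemma exp_mul_one_sub_sigmoid (x : ℝ) : exp x * (1 - sigmoid x) = sigmoid x := by
  simpa [← sigmoid_neg, mul_comm] using sigmoid_mul_rexp_neg (-x)

lemma hasDerivAt_softplus (x : ℝ) : HasDerivAt softplus (sigmoid x) x := by
  refine (((hasDerivAt_exp x).const_add 1).log (by positivity)).congr_deriv ?_
  rw [sigmoid_def, exp_neg]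
  field_simp
  ring

lemma convexOn_softplus : ConvexOn ℝ univ softplus :=
  convexOn_univ_of_hasDerivAt2_nonneg hasDerivAt_softplus hasDerivAt_sigmoid fun x =>
    mul_nonneg (sigmoid_nonneg x) (sub_nonneg.2 (sigmoid_le_one x))

lemma softplus_mul_deriv_sigmoid_le (x : ℝ) :
    softplus x * (sigmoid x * (1 - sigmoid x)) ≤ sigmoid x ^ 2 :=
  calc softplus x * (sigmoid x * (1 - sigmoid x))
      ≤ exp x * (sigmoid x * (1 - sigmoid x)) :=
        mul_le_mul_of_nonneg_right (softplus_le_exp x)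
          (mul_nonneg (sigmoid_nonneg x) (sub_nonneg.2 (sigmoid_le_one x)))
    _ = sigmoid x ^ 2 := by rw [mul_left_comm, exp_mul_one_sub_sigmoid, sq]

lemma convexOn_inv_softplus : ConvexOn ℝ univ fun x => (softplus x)⁻¹ :=
  convexOn_univ_inv_of_mul_deriv2_le softplus_pos hasDerivAt_softplus hasDerivAt_sigmoid
    fun x => (softplus_mul_deriv_sigmoid_le x).trans (by linarith [sq_nonneg (sigmoid x)])

theorem stmt14 (y a : ℝ) :
    ConvexOn ℝ Set.univ
      (fun s : ℝ => (y - a) ^ 2 / Real.log (1 + Real.exp s) + Real.log (1 + Real.exp s)) := by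
  exact (convexOn_inv_softplus.smul (sq_nonneg (y - a))).add convexOn_softplus
end

section
/- Let ψ : V × U → ℝ with E[ψ²] < ∞, let Π(V) = E[ψ | V] and σ²(V) = Var(ψ | V), and let R be a {0,1} random variable with P(R = 1 | V, U) = ρ(V) where ρ : V → (0, 1]. Define h = Rψ/ρ(V) − (R/ρ(V) − 1)Π(V). Then E[h] = E[ψ] and Var(h) = E[σ²(V)/ρ(V)] + Var(Π(V)). -/
open MeasureTheory ProbabilityTheory

private lemma integrable_mul_of_memℒp_two {Ω : Type*} {m0 : MeasurableSpace Ω} {μ : Measure Ω}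
    {f g : Ω → ℝ} (hf : MemLp f 2 μ) (hg : MemLp g 2 μ) :
    Integrable (fun ω => f ω * g ω) μ := by
  have hb : Integrable (fun ω => (f ω ^ 2 + g ω ^ 2) / 2) μ :=
    (hf.integrable_sq.add hg.integrable_sq).div_const 2
  refine hb.mono' (hf.1.mul hg.1) (Filter.Eventually.of_forall fun ω => ?_)
  rw [Real.norm_eq_abs, abs_mul]
  nlinarith [sq_nonneg (|f ω| - |g ω|), sq_abs (f ω), sq_abs (g ω)]

private lemma memℒp_two_condexp {Ω : Type*} {m : MeasurableSpace Ω} {m0 : MeasurableSpace Ω}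
    {μ : Measure Ω} [IsProbabilityMeasure μ] (hm : m ≤ m0) {f : Ω → ℝ}
    (hf : MemLp f 2 μ) : MemLp (μ[f|m]) 2 μ := by
  have hfi := hf.integrable one_le_two
  set fL : Lp ℝ 2 μ := hf.toLp f with hfL
  set gL : Lp ℝ 2 μ := (condExpL2 ℝ ℝ hm fL : Lp ℝ 2 μ) with hgL
  have hae : (gL : Ω → ℝ) =ᵐ[μ] μ[f|m] := by
    refine ae_eq_condExp_of_forall_setIntegral_eq hm hfi
      (fun s _ _ => ((Lp.memLp gL).integrable one_le_two).integrableOn)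
      (fun s hs hμs => ?_) ?_
    · rw [hgL, integral_condExpL2_eq hm fL hs hμs.ne]
      exact setIntegral_congr_ae (hm s hs) ((hf.coeFn_toLp).mono fun x hx _ => hx)
    · rw [hgL]; exact aestronglyMeasurable_condExpL2 hm fL
  exact MemLp.ae_eq hae (Lp.memLp gL)

private lemma pull_out {Ω : Type*} {m : MeasurableSpace Ω} {m0 : MeasurableSpace Ω}
    {μ : Measure Ω} [IsProbabilityMeasure μ] (hm : m ≤ m0) {g X : Ω → ℝ}
    (hg : StronglyMeasurable[m] g) (hgX : Integrable (fun ω => g ω * X ω) μ)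
    (hX : Integrable X μ) :
    ∫ ω, g ω * X ω ∂μ = ∫ ω, g ω * (μ[X|m]) ω ∂μ := by
  have h1 : ∫ ω, g ω * X ω ∂μ = ∫ ω, (μ[fun ω => g ω * X ω|m]) ω ∂μ :=
    (integral_condExp hm (f := fun ω => g ω * X ω)).symm
  rw [h1]
  refine integral_congr_ae ?_
  have h2 : μ[g * X|m] =ᵐ[μ] g * μ[X|m] := condExp_mul_of_stronglyMeasurable_left hg hgX hX
  filter_upwards [h2] with ω hω
  exact hω

theorem stmt16 {Ω α : Type*} (ℳ 𝒱 : MeasurableSpace Ω) [m0 : MeasurableSpace Ω] [MeasurableSpace α]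
    (μ : Measure Ω) [IsProbabilityMeasure μ]
    (h𝒱ℳ : 𝒱 ≤ ℳ) (hℳ : ℳ ≤ m0)
    (ψ : Ω → ℝ) (hψ : MemLp ψ 2 μ) (hψm : StronglyMeasurable[ℳ] ψ)
    (V : Ω → α) (ρ : α → ℝ) (hρr : ∀ v, ρ v ∈ Set.Ioc (0 : ℝ) 1)
    (c : ℝ) (hcpos : 0 < c) (hcρ : ∀ v, c ≤ ρ v)
    (hρV : Measurable[𝒱] fun ω => ρ (V ω))
    (R : Ω → ℝ) (hRm : Measurable R) (hRv : ∀ ω, R ω = 0 ∨ R ω = 1)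
    (hcond : μ[R | ℳ] =ᵐ[μ] fun ω => ρ (V ω)) :
    (∫ ω, (R ω * ψ ω / ρ (V ω) - (R ω / ρ (V ω) - 1) * (μ[ψ | 𝒱]) ω) ∂μ =
        ∫ ω, ψ ω ∂μ) ∧
    variance (fun ω => R ω * ψ ω / ρ (V ω) - (R ω / ρ (V ω) - 1) * (μ[ψ | 𝒱]) ω) μ =
      (∫ ω, ((μ[fun ω' => (ψ ω') ^ 2 | 𝒱]) ω - ((μ[ψ | 𝒱]) ω) ^ 2) / ρ (V ω) ∂μ) +
        variance (μ[ψ | 𝒱]) μ := by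
  have m𝒱 : 𝒱 ≤ m0 := h𝒱ℳ.trans hℳ
  set r : Ω → ℝ := fun ω => ρ (V ω) with hr_def
  set P : Ω → ℝ := μ[ψ | 𝒱] with hP_def
  have hr_pos : ∀ ω, 0 < r ω := fun ω => (hρr (V ω)).1
  have hr_ne : ∀ ω, r ω ≠ 0 := fun ω => (hr_pos ω).ne'
  have hr_c : ∀ ω, c ≤ r ω := fun ω => hcρ (V ω)
  have hR01 : ∀ ω, 0 ≤ R ω ∧ R ω ≤ 1 := fun ω => by
    rcases hRv ω with h | h <;> rw [h] <;> norm_num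
  -- measurability
  have hPsm : StronglyMeasurable[𝒱] P := stronglyMeasurable_condExp
  have hrm0 : Measurable[m0] r := hρV.mono m𝒱 le_rfl
  have hRm0 : Measurable[m0] R := hRm
  -- integrability basics
  have hP2 : MemLp P 2 μ := memℒp_two_condexp m𝒱 hψ
  set D : Ω → ℝ := fun ω => ψ ω - P ω with hD_def
  have hD2 : MemLp D 2 μ := hψ.sub hP2
  have hψi : Integrable ψ μ := hψ.integrable one_le_two
  have hPi : Integrable P μ := hP2.integrable one_le_two
  have hDi : Integrable D μ := hD2.integrable one_le_two
  have hDsq : Integrable (fun ω => D ω ^ 2) μ := hD2.integrable_sq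
  have hψsq : Integrable (fun ω => ψ ω ^ 2) μ := hψ.integrable_sq
  have hPsq : Integrable (fun ω => P ω ^ 2) μ := hP2.integrable_sq
  have hPψ : Integrable (fun ω => P ω * ψ ω) μ := integrable_mul_of_memℒp_two hP2 hψ
  have hDP : Integrable (fun ω => D ω * P ω) μ := integrable_mul_of_memℒp_two hD2 hP2
  have hRi : Integrable R μ := by
    refine (integrable_const (1 : ℝ) (μ := μ)).mono' (hRm0.aestronglyMeasurable (μ := μ))
      (Filter.Eventually.of_forall fun ω => ?_)
    rw [Real.norm_eq_abs, abs_of_nonneg (hR01 ω).1]; exact (hR01 ω).2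
  -- generic pull-out through ℳ, then replace condexp of R by r
  have key : ∀ g : Ω → ℝ, StronglyMeasurable[ℳ] g → Integrable (fun ω => g ω * R ω) μ →
      ∫ ω, g ω * R ω ∂μ = ∫ ω, g ω * r ω ∂μ := by
    intro g hgm hgR
    rw [pull_out hℳ hgm hgR hRi]
    exact integral_congr_ae (by filter_upwards [hcond] with ω hω; rw [hω])
  -- the main function, rewritten
  set b : Ω → ℝ := fun ω => R ω / r ω with hb_def
  have hb_bd : ∀ ω, |b ω| ≤ 1 / c := fun ω => by
    rw [hb_def, abs_div, abs_of_nonneg (hR01 ω).1, abs_of_pos (hr_pos ω)]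
    exact div_le_div₀ (by norm_num) (hR01 ω).2 hcpos (hr_c ω)
  have hbm : @AEStronglyMeasurable Ω ℝ _ m0 m0 b μ := (hRm0.div hrm0).aestronglyMeasurable
  have hfun : (fun ω => R ω * ψ ω / r ω - (R ω / r ω - 1) * P ω) =
      fun ω => b ω * D ω + P ω := by
    funext ω; simp only [hb_def, hD_def]; ring
  have hbD2 : MemLp (fun ω => b ω * D ω) 2 μ := by
    refine MemLp.of_le (hD2.const_mul (1 / c)) (hbm.mul hD2.1)
      (Filter.Eventually.of_forall fun ω => ?_)
    rw [Real.norm_eq_abs, Real.norm_eq_abs, abs_mul, abs_mul,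
      abs_of_pos (by positivity : (0:ℝ) < 1 / c)]
    exact mul_le_mul_of_nonneg_right (hb_bd ω) (abs_nonneg _)
  have hh2 : MemLp (fun ω => b ω * D ω + P ω) 2 μ := hbD2.add hP2
  -- Step A : the expectation
  have hDrm : StronglyMeasurable[ℳ] (fun ω => D ω / r ω) :=
    ((hψm.measurable.sub (hPsm.measurable.mono h𝒱ℳ le_rfl)).div
      (hρV.mono h𝒱ℳ le_rfl)).stronglyMeasurable
  have hbD_eq : (fun ω => b ω * D ω) = fun ω => D ω / r ω * R ω := by
    funext ω; simp only [hb_def]; ring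
  have hbDi : Integrable (fun ω => b ω * D ω) μ := hbD2.integrable one_le_two
  have hintP : ∫ ω, P ω ∂μ = ∫ ω, ψ ω ∂μ := integral_condExp m𝒱 (f := ψ)
  have hintD : ∫ ω, D ω ∂μ = 0 := by
    simp only [hD_def]
    rw [integral_sub hψi hPi, hintP, sub_self]
  have hintbD : ∫ ω, b ω * D ω ∂μ = 0 := by
    rw [hbD_eq, key _ hDrm (by rw [← hbD_eq]; exact hbDi)]
    calc ∫ ω, D ω / r ω * r ω ∂μ = ∫ ω, D ω ∂μ :=
          integral_congr_ae (Filter.Eventually.of_forall fun ω => div_mul_cancel₀ _ (hr_ne ω))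
      _ = 0 := hintD
  have stepA : ∫ ω, (b ω * D ω + P ω) ∂μ = ∫ ω, ψ ω ∂μ := by
    rw [integral_add hbDi hPi, hintbD, hintP, zero_add]
  -- conditional second moments
  have hcPψ : μ[fun ω => P ω * ψ ω | 𝒱] =ᵐ[μ] fun ω => P ω ^ 2 := by
    have h0 : (fun ω => P ω * ψ ω) = P * ψ := rfl
    rw [h0]
    have h : μ[P * ψ|𝒱] =ᵐ[μ] P * μ[ψ|𝒱] := condExp_mul_of_stronglyMeasurable_left hPsm hPψ hψi
    filter_upwards [h] with ω hω
    rw [hω, Pi.mul_apply, ← hP_def]; ring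
  have hcPsq : μ[fun ω => P ω ^ 2 | 𝒱] = fun ω => P ω ^ 2 := by
    refine condExp_of_stronglyMeasurable m𝒱 ?_ hPsq
    have : (fun ω => P ω ^ 2) = fun ω => P ω * P ω := by funext ω; ring
    rw [this]; exact hPsm.mul hPsm
  have hcDsq : μ[fun ω => D ω ^ 2 | 𝒱] =ᵐ[μ]
      fun ω => (μ[fun ω' => (ψ ω') ^ 2 | 𝒱]) ω - P ω ^ 2 := by
    have e0 : (fun ω => D ω ^ 2) =
        (((fun ω => ψ ω ^ 2) - fun ω => P ω * ψ ω) -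
          ((fun ω => P ω * ψ ω) - fun ω => P ω ^ 2) : Ω → ℝ) := by
      funext ω; simp only [Pi.sub_apply, hD_def]; ring
    rw [e0]
    have h1 := condExp_sub (μ := μ) (m := 𝒱) (hψsq.sub hPψ) (hPψ.sub hPsq)
    have h2 := condExp_sub (μ := μ) (m := 𝒱) hψsq hPψ
    have h3 := condExp_sub (μ := μ) (m := 𝒱) hPψ hPsq
    filter_upwards [h1, h2, h3, hcPψ] with ω k1 k2 k3 k4
    rw [k1]
    simp only [Pi.sub_apply]
    rw [k2, k3]
    simp only [Pi.sub_apply]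
    rw [k4, congrFun hcPsq ω]
    ring
  -- Step B
  have hDmM : Measurable[ℳ] D := hψm.measurable.sub (hPsm.measurable.mono h𝒱ℳ le_rfl)
  have hArm : StronglyMeasurable[ℳ] (fun ω => D ω ^ 2 / r ω ^ 2) :=
    ((hDmM.pow_const 2).div ((hρV.mono h𝒱ℳ le_rfl).pow_const 2)).stronglyMeasurable
  have hBrm : StronglyMeasurable[ℳ] (fun ω => D ω * P ω / r ω) :=
    ((hDmM.mul (hPsm.measurable.mono h𝒱ℳ le_rfl)).div
      (hρV.mono h𝒱ℳ le_rfl)).stronglyMeasurable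
  have hA_int : Integrable (fun ω => D ω ^ 2 / r ω ^ 2 * R ω) μ := by
    refine (hDsq.const_mul (1 / c ^ 2)).mono'
      ((hArm.mono hℳ).mul hRm0.stronglyMeasurable).aestronglyMeasurable
      (Filter.Eventually.of_forall fun ω => ?_)
    rw [Real.norm_eq_abs, abs_mul, abs_div, abs_of_nonneg (sq_nonneg (D ω)),
      abs_of_nonneg (sq_nonneg (r ω)), abs_of_nonneg (hR01 ω).1]
    have h2 : D ω ^ 2 / r ω ^ 2 ≤ D ω ^ 2 / c ^ 2 := by
      apply div_le_div_of_nonneg_left (sq_nonneg _) (by positivity)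
      nlinarith [hr_c ω, hr_pos ω]
    calc D ω ^ 2 / r ω ^ 2 * R ω ≤ D ω ^ 2 / c ^ 2 * 1 :=
          mul_le_mul h2 (hR01 ω).2 (hR01 ω).1 (by positivity)
      _ = 1 / c ^ 2 * D ω ^ 2 := by ring
  have hB_int : Integrable (fun ω => D ω * P ω / r ω * R ω) μ := by
    refine (hDP.abs.const_mul (1 / c)).mono'
      ((hBrm.mono hℳ).mul hRm0.stronglyMeasurable).aestronglyMeasurable
      (Filter.Eventually.of_forall fun ω => ?_)
    rw [Real.norm_eq_abs, abs_mul, abs_div, abs_of_nonneg (hR01 ω).1]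
    have h2 : |D ω * P ω| / r ω ≤ |D ω * P ω| / c :=
      div_le_div_of_nonneg_left (abs_nonneg _) hcpos (hr_c ω)
    calc |D ω * P ω| / |r ω| * R ω ≤ |D ω * P ω| / c * 1 := by
          rw [abs_of_pos (hr_pos ω)]
          exact mul_le_mul h2 (hR01 ω).2 (hR01 ω).1 (by positivity)
      _ = 1 / c * |D ω * P ω| := by ring
  -- ∫ A
  have hA : ∫ ω, D ω ^ 2 / r ω ^ 2 * R ω ∂μ =
      ∫ ω, ((μ[fun ω' => (ψ ω') ^ 2 | 𝒱]) ω - P ω ^ 2) / r ω ∂μ := by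
    rw [key _ hArm hA_int]
    have e : ∫ ω, D ω ^ 2 / r ω ^ 2 * r ω ∂μ = ∫ ω, (1 / r ω) * D ω ^ 2 ∂μ := by
      refine integral_congr_ae (Filter.Eventually.of_forall fun ω => ?_)
      have := hr_ne ω
      field_simp
    have hgi : Integrable (fun ω => 1 / r ω * D ω ^ 2) μ := by
      refine (hDsq.const_mul (1 / c)).mono'
        ((((measurable_const.div hρV).mono m𝒱 le_rfl).aestronglyMeasurable (μ := μ)).mul hDsq.1)
        (Filter.Eventually.of_forall fun ω => ?_)
      rw [Real.norm_eq_abs, abs_mul, abs_of_nonneg (sq_nonneg (D ω)), abs_div,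
        abs_of_pos (hr_pos ω), abs_one]
      exact mul_le_mul_of_nonneg_right
        (div_le_div₀ (by norm_num) le_rfl hcpos (hr_c ω)) (sq_nonneg _)
    rw [e, pull_out m𝒱 (g := fun ω => 1 / r ω) ((measurable_const.div hρV).stronglyMeasurable) hgi hDsq]
    refine integral_congr_ae ?_
    filter_upwards [hcDsq] with ω hω
    rw [hω]; ring
  -- ∫ B
  have hintDP : ∫ ω, D ω * P ω ∂μ = 0 := by
    have e : (fun ω => D ω * P ω) = fun ω => P ω * ψ ω - P ω ^ 2 := by
      funext ω; simp only [hD_def]; ring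
    rw [e, integral_sub hPψ hPsq, pull_out m𝒱 hPsm hPψ hψi]
    have e2 : ∫ ω, P ω * (μ[ψ|𝒱]) ω ∂μ = ∫ ω, P ω ^ 2 ∂μ := by
      refine integral_congr_ae (Filter.Eventually.of_forall fun ω => ?_)
      rw [← hP_def]; ring
    rw [e2, sub_self]
  have hB : ∫ ω, D ω * P ω / r ω * R ω ∂μ = 0 := by
    rw [key _ hBrm hB_int]
    calc ∫ ω, D ω * P ω / r ω * r ω ∂μ = ∫ ω, D ω * P ω ∂μ :=
          integral_congr_ae (Filter.Eventually.of_forall fun ω => div_mul_cancel₀ _ (hr_ne ω))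
      _ = 0 := hintDP
  -- expand the square
  have hsq : (fun ω => (b ω * D ω + P ω) ^ 2) =
      fun ω => D ω ^ 2 / r ω ^ 2 * R ω + (2 * (D ω * P ω / r ω * R ω) + P ω ^ 2) := by
    funext ω
    simp only [hb_def]
    rcases hRv ω with h | h <;> rw [h] <;> field_simp <;> ring
  have h2B : Integrable (fun ω => 2 * (D ω * P ω / r ω * R ω)) μ := hB_int.const_mul 2
  have h2BC : Integrable (fun ω => 2 * (D ω * P ω / r ω * R ω) + P ω ^ 2) μ := h2B.add hPsq
  have hintsq : ∫ ω, (b ω * D ω + P ω) ^ 2 ∂μ =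
      (∫ ω, ((μ[fun ω' => (ψ ω') ^ 2 | 𝒱]) ω - P ω ^ 2) / r ω ∂μ) + ∫ ω, P ω ^ 2 ∂μ := by
    rw [hsq, integral_add hA_int h2BC, integral_add h2B hPsq, integral_const_mul, hB, hA]
    ring
  -- conclude
  rw [hfun]
  refine ⟨stepA, ?_⟩
  rw [variance_eq_sub hh2, variance_eq_sub hP2]
  have e1 : ∫ ω, ((fun ω => b ω * D ω + P ω) ^ 2) ω ∂μ = ∫ ω, (b ω * D ω + P ω) ^ 2 ∂μ := by
    refine integral_congr_ae (Filter.Eventually.of_forall fun ω => ?_)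
    simp
  have e2 : ∫ ω, (P ^ 2) ω ∂μ = ∫ ω, P ω ^ 2 ∂μ := by
    refine integral_congr_ae (Filter.Eventually.of_forall fun ω => ?_)
    simp
  rw [e1, e2, hintsq, stepA, hintP]
  ring
end

section
/- Under the setting of the previous statement, for any square-integrable functions s(V, U) with E[s(V,U) | V] = 0 and s₀(V) with E[s₀(V)] = 0, one has E[h·(R·s(V,U) + s₀(V))] = E[ψ·s(V,U)] + E[ψ·s₀(V)], where h = Rψ/ρ(V) − (R/ρ(V) − 1)Π(V). -/
open MeasureTheory ProbabilityTheory

lemma l2_mul_integrable {Ω : Type*} [m0 : MeasurableSpace Ω] {μ : Measure Ω}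
    {f g : Ω → ℝ} (hf : MemLp f 2 μ) (hg : MemLp g 2 μ) :
    Integrable (fun ω => f ω * g ω) μ := by
  have h := MemLp.smul (r := 1) hf hg
    (hpqr := ⟨by norm_num [ENNReal.inv_two_add_inv_two]⟩)
  rw [memLp_one_iff_integrable] at h
  exact h.congr (Filter.Eventually.of_forall fun ω => by simp [mul_comm])

lemma condexp_memL2 {Ω : Type*} {m m0 : MeasurableSpace Ω} {μ : Measure Ω}
    (hm : m ≤ m0) [IsProbabilityMeasure μ]
    {f : Ω → ℝ} (hf : MemLp f 2 μ) : MemLp (μ[f|m]) 2 μ := by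
  have heq : ((condExpL2 ℝ ℝ hm (hf.toLp f) : Lp ℝ 2 μ) : Ω → ℝ) =ᵐ[μ] μ[f|m] := by
    refine ae_eq_condExp_of_forall_setIntegral_eq hm (hf.integrable one_le_two)
      (fun s hs hμs => ?_) (fun s hs hμs => ?_) ?_
    · exact integrableOn_Lp_of_measure_ne_top _ one_le_two hμs.ne
    · rw [integral_condExpL2_eq (𝕜 := ℝ) hm (hf.toLp f) hs hμs.ne]
      exact setIntegral_congr_ae (hm s hs) ((hf.coeFn_toLp).mono fun x hx _ => hx)
    · exact aestronglyMeasurable_condExpL2 hm _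
  exact (Lp.memLp _).ae_eq heq

theorem stmt17 {Ω α : Type*} (ℳ 𝒱 : MeasurableSpace Ω) [m0 : MeasurableSpace Ω] [MeasurableSpace α]
    (μ : Measure Ω) [IsProbabilityMeasure μ]
    (h𝒱ℳ : 𝒱 ≤ ℳ) (hℳ : ℳ ≤ m0)
    (ψ : Ω → ℝ) (hψ : MemLp ψ 2 μ) (hψm : StronglyMeasurable[ℳ] ψ)
    (V : Ω → α) (ρ : α → ℝ) (hρr : ∀ v, ρ v ∈ Set.Ioc (0 : ℝ) 1)
    (c : ℝ) (hcpos : 0 < c) (hcρ : ∀ v, c ≤ ρ v)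
    (hρV : Measurable[𝒱] fun ω => ρ (V ω))
    (R : Ω → ℝ) (hRm : Measurable R) (hRv : ∀ ω, R ω = 0 ∨ R ω = 1)
    (hcond : μ[R | ℳ] =ᵐ[μ] fun ω => ρ (V ω))
    (s : Ω → ℝ) (hs : MemLp s 2 μ) (hsm : StronglyMeasurable[ℳ] s)
    (hscond : μ[s | 𝒱] =ᵐ[μ] 0)
    (s₀ : Ω → ℝ) (hs₀ : MemLp s₀ 2 μ) (hs₀m : StronglyMeasurable[𝒱] s₀)
    (hs₀mean : ∫ ω, s₀ ω ∂μ = 0) :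
    ∫ ω, (R ω * ψ ω / ρ (V ω) - (R ω / ρ (V ω) - 1) * (μ[ψ | 𝒱]) ω) *
        (R ω * s ω + s₀ ω) ∂μ =
      (∫ ω, ψ ω * s ω ∂μ) + ∫ ω, ψ ω * s₀ ω ∂μ := by
  have h𝒱 : 𝒱 ≤ m0 := h𝒱ℳ.trans hℳ
  set P : Ω → ℝ := μ[ψ | 𝒱] with hPdef
  have hP2 : MemLp P 2 μ := condexp_memL2 h𝒱 hψ
  have hPsm : StronglyMeasurable[𝒱] P := stronglyMeasurable_condExp
  have hρne : ∀ ω, ρ (V ω) ≠ 0 := fun ω => (hρr (V ω)).1.ne'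
  -- properties of R
  have hRbd : ∀ ω, ‖R ω‖ ≤ 1 := by
    intro ω; rcases hRv ω with h | h <;> simp [h]
  have hRint : Integrable R μ :=
    Integrable.mono' (integrable_const (1 : ℝ)) hRm.aestronglyMeasurable
      (Filter.Eventually.of_forall hRbd)
  -- integrable products
  have hA1 : Integrable (fun ω => ψ ω * s ω) μ := l2_mul_integrable (m0 := m0) hψ hs
  have hA2 : Integrable (fun ω => ψ ω * s₀ ω) μ := l2_mul_integrable (m0 := m0) hψ hs₀
  have hA3 : Integrable (fun ω => P ω * s ω) μ := l2_mul_integrable (m0 := m0) hP2 hs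
  have hA4 : Integrable (fun ω => P ω * s₀ ω) μ := l2_mul_integrable (m0 := m0) hP2 hs₀
  -- measurability helpers
  have hρVsm : StronglyMeasurable[𝒱] fun ω => ρ (V ω) := hρV.stronglyMeasurable
  have hρVinvsm : StronglyMeasurable[𝒱] fun ω => (ρ (V ω))⁻¹ :=
    hρV.inv.stronglyMeasurable
  -- the (1-ρ)·P·s term
  have hA3' : Integrable (fun ω => ((1 - ρ (V ω)) * P ω) * s ω) μ := by
    have h1 : Integrable (fun ω => (1 - ρ (V ω)) * (P ω * s ω)) μ := by
      refine hA3.bdd_mul (c := 1) ?_ (Filter.Eventually.of_forall fun ω => ?_)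
      · exact ((stronglyMeasurable_const.sub hρVsm).mono h𝒱).aestronglyMeasurable
      · have h2 := hρr (V ω)
        rw [Real.norm_eq_abs, abs_le]
        constructor <;> nlinarith [h2.1, h2.2]
    exact h1.congr (Filter.Eventually.of_forall fun ω => (mul_assoc _ _ _).symm)
  -- core and G
  set core : Ω → ℝ := fun ω =>
    ψ ω * s ω + ψ ω * s₀ ω - ((1 - ρ (V ω)) * P ω) * s ω - P ω * s₀ ω with hcore
  have hcoreint : Integrable core μ := ((hA1.add hA2).sub hA3').sub hA4
  set G : Ω → ℝ := fun ω => (ρ (V ω))⁻¹ * core ω with hG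
  have hGm : StronglyMeasurable[ℳ] G := by
    refine (hρVinvsm.mono h𝒱ℳ).mul ?_
    exact (((hψm.mul hsm).add (hψm.mul (hs₀m.mono h𝒱ℳ))).sub
        (((stronglyMeasurable_const.sub (hρVsm.mono h𝒱ℳ)).mul
          (hPsm.mono h𝒱ℳ)).mul hsm)).sub ((hPsm.mono h𝒱ℳ).mul (hs₀m.mono h𝒱ℳ))
  have hGint : Integrable G μ := by
    refine hcoreint.bdd_mul ((hρVinvsm.mono h𝒱).aestronglyMeasurable) (c := c⁻¹) (Filter.Eventually.of_forall fun ω => ?_)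
    rw [Real.norm_eq_abs, abs_of_pos (inv_pos.mpr (hρr (V ω)).1)]
    exact inv_anti₀ hcpos (hcρ (V ω))
  have hGRint : Integrable (fun ω => G ω * R ω) μ := by
    have := hGint.bdd_mul hRm.aestronglyMeasurable (c := 1) (Filter.Eventually.of_forall hRbd)
    exact this.congr (Filter.Eventually.of_forall fun ω => mul_comm _ _)
  -- key lemma A : ∫ f·R = ∫ f·ρ(V) for ℳ-measurable f
  have keyA : ∫ ω, G ω * R ω ∂μ = ∫ ω, G ω * ρ (V ω) ∂μ := by
    have h2 := condExp_mul_of_stronglyMeasurable_left (μ := μ) (m := ℳ) hGm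
      (show Integrable (G * R) μ from hGRint) hRint
    have h1 : μ[(fun ω => G ω * R ω)|ℳ] =ᵐ[μ] fun ω => G ω * ρ (V ω) := by
      refine h2.trans ?_
      filter_upwards [hcond] with ω hω
      simp only [Pi.mul_apply, hω]
    calc ∫ ω, G ω * R ω ∂μ
        = ∫ ω, (μ[(fun ω => G ω * R ω)|ℳ]) ω ∂μ := (integral_condExp hℳ (f := fun ω => G ω * R ω)).symm
      _ = ∫ ω, G ω * ρ (V ω) ∂μ := integral_congr_ae h1
  -- key lemma B : ∫ g·s = 0 for 𝒱-measurable g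
  have keyB : ∀ g : Ω → ℝ, StronglyMeasurable[𝒱] g →
      Integrable (fun ω => g ω * s ω) μ → ∫ ω, g ω * s ω ∂μ = 0 := by
    intro g hgm hgs
    have h2 := condExp_mul_of_stronglyMeasurable_left (μ := μ) (m := 𝒱) hgm
      (show Integrable (g * s) μ from hgs) (hs.integrable one_le_two)
    have h3 : μ[(fun ω => g ω * s ω)|𝒱] =ᵐ[μ] 0 := by
      refine h2.trans ?_
      filter_upwards [hscond] with ω hω
      simp only [Pi.mul_apply, hω, Pi.zero_apply, mul_zero]
    calc ∫ ω, g ω * s ω ∂μ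
        = ∫ ω, (μ[(fun ω => g ω * s ω)|𝒱]) ω ∂μ := (integral_condExp h𝒱 (f := fun ω => g ω * s ω)).symm
      _ = ∫ ω, (0 : Ω → ℝ) ω ∂μ := integral_congr_ae h3
      _ = 0 := by simp
  -- pointwise algebraic identity
  have hpt : ∀ ω, (R ω * ψ ω / ρ (V ω) - (R ω / ρ (V ω) - 1) * P ω) * (R ω * s ω + s₀ ω)
      = G ω * R ω + P ω * s₀ ω := by
    intro ω
    have hρ := hρne ω
    simp only [hG, hcore]
    rcases hRv ω with h | h <;> rw [h] <;> field_simp <;> ring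
  calc ∫ ω, (R ω * ψ ω / ρ (V ω) - (R ω / ρ (V ω) - 1) * P ω) * (R ω * s ω + s₀ ω) ∂μ
      = ∫ ω, (G ω * R ω + P ω * s₀ ω) ∂μ :=
        integral_congr_ae (Filter.Eventually.of_forall hpt)
    _ = (∫ ω, G ω * R ω ∂μ) + ∫ ω, P ω * s₀ ω ∂μ := integral_add hGRint hA4
    _ = (∫ ω, G ω * ρ (V ω) ∂μ) + ∫ ω, P ω * s₀ ω ∂μ := by rw [keyA]
    _ = (∫ ω, core ω ∂μ) + ∫ ω, P ω * s₀ ω ∂μ := by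
        congr 1
        refine integral_congr_ae (Filter.Eventually.of_forall fun ω => ?_)
        show (ρ (V ω))⁻¹ * core ω * ρ (V ω) = core ω
        rw [mul_comm ((ρ (V ω))⁻¹) (core ω), mul_assoc, inv_mul_cancel₀ (hρne ω), mul_one]
    _ = ((∫ ω, ψ ω * s ω ∂μ) + (∫ ω, ψ ω * s₀ ω ∂μ)
          - (∫ ω, ((1 - ρ (V ω)) * P ω) * s ω ∂μ) - ∫ ω, P ω * s₀ ω ∂μ)
          + ∫ ω, P ω * s₀ ω ∂μ := by
        have hC : Integrable (fun ω => ψ ω * s ω + ψ ω * s₀ ω) μ := hA1.add hA2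
        have hD : Integrable (fun ω =>
            ψ ω * s ω + ψ ω * s₀ ω - (1 - ρ (V ω)) * P ω * s ω) μ := hC.sub hA3'
        rw [hcore]
        rw [integral_sub hD hA4, integral_sub hC hA3', integral_add hA1 hA2]
    _ = (∫ ω, ψ ω * s ω ∂μ) + ∫ ω, ψ ω * s₀ ω ∂μ := by
        rw [keyB (fun ω => (1 - ρ (V ω)) * P ω)
          ((stronglyMeasurable_const.sub hρVsm).mul hPsm) hA3']
        ring
end
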